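/- In a connected convex bipartite graph G(X,Y) convex on X, consider the two candidate connecting paths in Algorithm 2 between consecutive terminals: P_1 starting from p = r(w(z)) and P_2 starting from q = z_j, both ending at the next terminal z_{j+1}, producing vertex sets S_1 and S_2 respectively. Then ||S_1| − |S_2|| ≤ 1. -/

import Mathlib

/-!
Write `F x = r (w x)`. Then `x ≤ F x`, and convexity gives `F a ≤ F b` whenever
`a ≤ b ≤ F a` (because `b` is then adjacent to `w a`). Since `z_j ≤ r (w z) ≤ r (w z_j)`, the
`F`-orbits `v` of `z_j` and `u` of `r (w z)` interleave: `v i ≤ u i ≤ v (i + 1)`. Before its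
stopping index an orbit stays below `z_{j+1}`, and it stops at the first step where `F` passes
`z_{j+1}`; interleaving then forces `s ≤ t ≤ s + 1`. Both orbits increase strictly up to their
stopping index, so `|S₁| = 2s + 1` and `|S₂| = 2t`.
-/

/-- `S` is a Steiner set for terminal set `R` in `G`: the subgraph induced on `R ∪ S`
is connected. -/
def IsSteinerSet {V : Type*} (G : SimpleGraph V) (R S : Set V) : Prop :=
  (G.induce (R ∪ S)).Connected

/-- `S` is a minimum Steiner set for terminal set `R` in `G`. -/
def IsMinSteinerSet {V : Type*} (G : SimpleGraph V) (R S : Set V) : Prop :=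
  IsSteinerSet G R S ∧ ∀ S' : Set V, IsSteinerSet G R S' → S.ncard ≤ S'.ncard

/-- The bipartite graph on `α ⊕ β` determined by the cross-adjacency relation `A`. -/
def biGraph {α β : Type*} (A : α → β → Prop) : SimpleGraph (α ⊕ β) where
  Adj u v := (∃ a b, u = .inl a ∧ v = .inr b ∧ A a b) ∨ (∃ a b, u = .inr b ∧ v = .inl a ∧ A a b)
  symm := by
    refine ⟨?_⟩
    rintro u v (⟨a,b,h1,h2,h3⟩|⟨a,b,h1,h2,h3⟩)
    · exact Or.inr ⟨a,b,h2,h1,h3⟩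
    · exact Or.inl ⟨a,b,h2,h1,h3⟩
  loopless := by refine ⟨?_⟩; rintro (a|b) (⟨x,y,h1,h2,_⟩|⟨x,y,h1,h2,_⟩) <;> simp_all


section Iterates

variable {α : Type*} {F : α → α} {x y : ℕ → α}

lemma eq_of_le_of_succ_eq (hx : ∀ i, x (i + 1) = F (x i)) {i : ℕ} (hi : x (i + 1) = x i) :
    ∀ j, i ≤ j → x j = x i :=
  Nat.le_induction rfl fun j _ ih => by rw [hx, ih, ← hx, hi]

variable [LinearOrder α]

lemma strictMonoOn_Iic_of_first_hit (hle : ∀ a, a ≤ F a) (hx : ∀ i, x (i + 1) = F (x i))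
    {P : α → Prop} {n : ℕ} (hn : P (x n)) (hlt : ∀ i < n, ¬ P (x i)) :
    StrictMonoOn x (Set.Iic n) := by
  refine strictMonoOn_Iic_of_lt_succ fun i hi => (hx i ▸ hle (x i)).lt_of_ne fun h => ?_
  exact hlt i hi (eq_of_le_of_succ_eq hx h.symm n hi.le ▸ hn)

lemma interleaved_of_le_of_le_one (hmono : ∀ a b, a ≤ b → b ≤ F a → F a ≤ F b)
    (hx : ∀ i, x (i + 1) = F (x i)) (hy : ∀ i, y (i + 1) = F (y i))
    (h0 : x 0 ≤ y 0) (h1 : y 0 ≤ x 1) : ∀ i, x i ≤ y i ∧ y i ≤ x (i + 1)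
  | 0 => ⟨h0, h1⟩
  | i + 1 => by
    obtain ⟨hxy, hyx⟩ := interleaved_of_le_of_le_one hmono hx hy h0 h1 i
    have hxy' : x (i + 1) ≤ y (i + 1) := by
      rw [hx, hy]; exact hmono _ _ hxy (hx i ▸ hyx)
    refine ⟨hxy', ?_⟩
    rw [hy, hx]; exact hmono _ _ hyx (hy i ▸ hxy')

lemma succ_lt_of_lt_first_hit {P : α → Prop} {c : α} (hP : ∀ a, a ≤ c → c ≤ F a → P a)
    (hx : ∀ i, x (i + 1) = F (x i)) (h0 : x 0 ≤ c) {n : ℕ} (hlt : ∀ i < n, ¬ P (x i)) :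
    ∀ i < n, x (i + 1) < c
  | i, hi => by
    have hxc : x i ≤ c := by
      cases i with
      | zero => exact h0
      | succ k => exact (succ_lt_of_lt_first_hit hP hx h0 hlt k (by omega)).le
    rw [hx]
    exact lt_of_not_ge fun h => hlt i hi (hP _ hxc h)

/-- Among points `≤ c`, `P` holds exactly where `F` reaches `c`. -/
lemma first_hit_le_and_le_succ {P : α → Prop} {c : α} (hPle : ∀ a, P a → c ≤ F a)
    (hP : ∀ a, a ≤ c → c ≤ F a → P a)
    (hx : ∀ i, x (i + 1) = F (x i)) (hy : ∀ i, y (i + 1) = F (y i))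
    (hxy : ∀ i, x i ≤ y i ∧ y i ≤ x (i + 1)) (hy0 : y 0 ≤ c) {s t : ℕ}
    (hs : P (y s)) (hs' : ∀ i < s, ¬ P (y i)) (ht : P (x t)) (ht' : ∀ i < t, ¬ P (x i)) :
    s ≤ t ∧ t ≤ s + 1 := by
  have hx0 : x 0 ≤ c := (hxy 0).1.trans hy0
  constructor
  · by_contra! h
    have := hx t ▸ hPle _ ht
    exact (this.trans (hxy (t + 1)).1).not_gt (succ_lt_of_lt_first_hit hP hy hy0 hs' t h)
  · by_contra! h
    have := hy s ▸ hPle _ hs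
    exact (this.trans (hxy (s + 1)).2).not_gt
      (succ_lt_of_lt_first_hit hP hx hx0 ht' (s + 1) h)

end Iterates

lemma ncard_image_inl_union_image_inr {ι α β : Type*} {f : ι → α} {g : ι → β} {a b : Set ι}
    (ha : a.Finite) (hb : b.Finite) (hf : Set.InjOn f a) (hg : Set.InjOn g b) :
    ((Sum.inl ∘ f) '' a ∪ (Sum.inr ∘ g) '' b : Set (α ⊕ β)).ncard = a.ncard + b.ncard := by
  rw [Set.image_comp, Set.image_comp, Set.ncard_union_eq Set.disjoint_image_inl_image_inr
      ((ha.image f).image _) ((hb.image g).image _),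
    Set.ncard_image_of_injective _ Sum.inl_injective,
    Set.ncard_image_of_injective _ Sum.inr_injective,
    hf.ncard_image, hg.ncard_image]

section PathVertices

variable {α β : Type*} {r : β → α} {w : α → β} {x : ℕ → α} {n : ℕ}

lemma injOn_comp_Iio (hx : ∀ i, x (i + 1) = r (w (x i))) (hinj : Set.InjOn x (Set.Icc 1 n)) :
    Set.InjOn (w ∘ x) (Set.Iio n) := by
  refine Set.InjOn.of_comp (g := r) fun i hi j hj hij => ?_
  simp only [Set.mem_Iio, Function.comp_apply, ← hx] at hi hj hij
  have := hinj ⟨by omega, hi⟩ ⟨by omega, hj⟩ hij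
  omega

lemma ncard_path_from (hx : ∀ i, x (i + 1) = r (w (x i))) (hinj : Set.InjOn x (Set.Iic n)) :
    ({p : α ⊕ β | ∃ i ≤ n, p = .inl (x i)} ∪ {p | ∃ i < n, p = .inr (w (x i))}).ncard =
      2 * n + 1 := by
  have hS : {p : α ⊕ β | ∃ i ≤ n, p = .inl (x i)} ∪ {p | ∃ i < n, p = .inr (w (x i))} =
      (Sum.inl ∘ x) '' Set.Iic n ∪ (Sum.inr ∘ w ∘ x) '' Set.Iio n := by
    ext p; simp [eq_comm]
  rw [hS, ncard_image_inl_union_image_inr (Set.finite_Iic n) (Set.finite_Iio n) hinj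
    (injOn_comp_Iio hx (hinj.mono Set.Icc_subset_Iic_self)), ← Finset.coe_Iic, ← Finset.coe_Iio,
    Set.ncard_coe_finset, Set.ncard_coe_finset, Nat.card_Iic, Nat.card_Iio]
  ring

lemma ncard_path_after (hx : ∀ i, x (i + 1) = r (w (x i))) (hinj : Set.InjOn x (Set.Icc 1 n)) :
    ({p : α ⊕ β | ∃ i, 1 ≤ i ∧ i ≤ n ∧ p = .inl (x i)} ∪
      {p | ∃ i < n, p = .inr (w (x i))}).ncard = 2 * n := by
  have hS : {p : α ⊕ β | ∃ i, 1 ≤ i ∧ i ≤ n ∧ p = .inl (x i)} ∪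
      {p | ∃ i < n, p = .inr (w (x i))} =
      (Sum.inl ∘ x) '' Set.Icc 1 n ∪ (Sum.inr ∘ w ∘ x) '' Set.Iio n := by
    ext p; simp [eq_comm, and_assoc]
  rw [hS, ncard_image_inl_union_image_inr (Set.finite_Icc 1 n) (Set.finite_Iio n) hinj
    (injOn_comp_Iio hx hinj), ← Finset.coe_Icc, ← Finset.coe_Iio,
    Set.ncard_coe_finset, Set.ncard_coe_finset, Nat.card_Icc, Nat.card_Iio]
  omega

end PathVertices

theorem stmt19_general {m : ℕ} {Y : Type*} (A : Fin m → Y → Prop)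
    (hconv : ∀ (y : Y) (a b c : Fin m), a ≤ b → b ≤ c → A a y → A c y → A b y)
    (r : Y → Fin m) (hr : ∀ y : Y, A (r y) y ∧ ∀ x : Fin m, A x y → x ≤ r y)
    (w : Fin m → Y) (hw : ∀ x : Fin m, A x (w x) ∧ ∀ y : Y, A x y → r y ≤ r (w x))
    (z zj z' : Fin m) (hzj : A zj (w z)) (hzjz' : zj < z') (hz' : ¬ A z' (w z))
    (u v : ℕ → Fin m)
    (hu0 : u 0 = r (w z)) (hu : ∀ i, u (i + 1) = r (w (u i)))
    (hv0 : v 0 = zj) (hv : ∀ i, v (i + 1) = r (w (v i)))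
    (s t : ℕ)
    (hs : A z' (w (u s)) ∧ ∀ i < s, ¬ A z' (w (u i)))
    (ht : A z' (w (v t)) ∧ ∀ i < t, ¬ A z' (w (v i))) :
    ({x : Fin m ⊕ Y | ∃ i ≤ s, x = Sum.inl (u i)} ∪
        {x | ∃ i < s, x = Sum.inr (w (u i))}).ncard ≤
      ({x : Fin m ⊕ Y | ∃ i, 1 ≤ i ∧ i ≤ t ∧ x = Sum.inl (v i)} ∪
        {x | ∃ i < t, x = Sum.inr (w (v i))}).ncard + 1 ∧
    ({x : Fin m ⊕ Y | ∃ i, 1 ≤ i ∧ i ≤ t ∧ x = Sum.inl (v i)} ∪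
        {x | ∃ i < t, x = Sum.inr (w (v i))}).ncard ≤
      ({x : Fin m ⊕ Y | ∃ i ≤ s, x = Sum.inl (u i)} ∪
        {x | ∃ i < s, x = Sum.inr (w (u i))}).ncard + 1 := by
  have hle : ∀ x, x ≤ r (w x) := fun x => (hr (w x)).2 x (hw x).1
  have hadj : ∀ x c, x ≤ c → c ≤ r (w x) → A c (w x) :=
    fun x c h1 h2 => hconv (w x) x c (r (w x)) h1 h2 (hw x).1 (hr (w x)).1
  have hmono : ∀ a b, a ≤ b → b ≤ r (w a) → r (w a) ≤ r (w b) :=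
    fun a b hab hb => (hw b).2 _ (hadj a b hab hb)
  have hvu : ∀ i, v i ≤ u i ∧ u i ≤ v (i + 1) :=
    interleaved_of_le_of_le_one hmono hv hu (by rw [hv0, hu0]; exact (hr _).2 _ hzj)
      (by rw [hu0, hv, hv0]; exact (hw zj).2 _ hzj)
  have hu0z' : u 0 ≤ z' := by
    rw [hu0]
    exact le_of_not_ge fun h => hz' (hconv _ zj z' _ hzjz'.le h hzj (hr _).1)
  obtain ⟨hst, hts⟩ := first_hit_le_and_le_succ (P := fun x => A z' (w x))
    (fun a h => (hr _).2 _ h) (fun a => hadj a z') hv hu hvu hu0z' hs.1 hs.2 ht.1 ht.2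
  have hu_inj : Set.InjOn u (Set.Iic s) :=
    (strictMonoOn_Iic_of_first_hit (P := fun x => A z' (w x)) hle hu hs.1 hs.2).injOn
  have hv_inj : Set.InjOn v (Set.Icc 1 t) :=
    (strictMonoOn_Iic_of_first_hit (P := fun x => A z' (w x)) hle hv ht.1 ht.2).injOn.mono
      Set.Icc_subset_Iic_self
  rw [ncard_path_from hu hu_inj, ncard_path_after hv hv_inj]
  omega

/-- In Algorithm 2 for `R ⊂ X` in a connected convex bipartite graph, the two candidate
connecting vertex sets `S₁` (path from `p = r (w z)`) and `S₂` (path from `q = z_j`),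
both reaching the next terminal `z'`, differ in cardinality by at most one. -/
theorem stmt19 {m : ℕ} {Y : Type*} (A : Fin m → Y → Prop)
    (hconn : (biGraph A).Connected)
    (hconv : ∀ (y : Y) (a b c : Fin m), a ≤ b → b ≤ c → A a y → A c y → A b y)
    (r : Y → Fin m) (hr : ∀ y : Y, A (r y) y ∧ ∀ x : Fin m, A x y → x ≤ r y)
    (w : Fin m → Y) (hw : ∀ x : Fin m, A x (w x) ∧ ∀ y : Y, A x y → r y ≤ r (w x))
    (z zj z' : Fin m) (hzj : A zj (w z)) (hzjz' : zj < z') (hz' : ¬ A z' (w z))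
    (u v : ℕ → Fin m)
    (hu0 : u 0 = r (w z)) (hu : ∀ i, u (i + 1) = r (w (u i)))
    (hv0 : v 0 = zj) (hv : ∀ i, v (i + 1) = r (w (v i)))
    (s t : ℕ)
    (hs : A z' (w (u s)) ∧ ∀ i < s, ¬ A z' (w (u i)))
    (ht : A z' (w (v t)) ∧ ∀ i < t, ¬ A z' (w (v i))) :
    ({x : Fin m ⊕ Y | ∃ i ≤ s, x = Sum.inl (u i)} ∪
        {x | ∃ i < s, x = Sum.inr (w (u i))}).ncard ≤
      ({x : Fin m ⊕ Y | ∃ i, 1 ≤ i ∧ i ≤ t ∧ x = Sum.inl (v i)} ∪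
        {x | ∃ i < t, x = Sum.inr (w (v i))}).ncard + 1 ∧
    ({x : Fin m ⊕ Y | ∃ i, 1 ≤ i ∧ i ≤ t ∧ x = Sum.inl (v i)} ∪
        {x | ∃ i < t, x = Sum.inr (w (v i))}).ncard ≤
      ({x : Fin m ⊕ Y | ∃ i ≤ s, x = Sum.inl (u i)} ∪
        {x | ∃ i < s, x = Sum.inr (w (u i))}).ncard + 1 :=
  stmt19_general A hconv r hr w hw z zj z' hzj hzjz' hz' u v hu0 hu hv0 hv s t hs ht
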